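/- Let θν = J Σ^{1/2} γ with J ∈ ℝ^{3×n}, Σ ∈ 𝕊ⁿ₊, γ in the closed unit ball of ℝⁿ, ν a unit vector, and θ ≥ 0. Then for any γ_shp ∈ ℝ³, ‖exp([θν]×)γ_shp − γ_shp‖₂ ≤ √(λ_max(J Σ Jᵀ)) · ‖γ_shp‖₂. -/

import Mathlib

open Matrix

noncomputable def eunorm {n : ℕ} (v : Fin n → ℝ) : ℝ := Real.sqrt (∑ i, v i ^ 2)

section PSDSqrt

open scoped ComplexOrder

/-- The square root of a positive semidefinite matrix, as `Matrix.PosSemidef.sqrt` was defined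
in Mathlib (Dec 2024); that definition has since been removed. -/
noncomputable def Matrix.PosSemidef.sqrt {n : Type*} [Fintype n] [DecidableEq n] {𝕜 : Type*}
    [RCLike 𝕜] {A : Matrix n n 𝕜} (hA : A.PosSemidef) : Matrix n n 𝕜 :=
  hA.1.eigenvectorUnitary.1 * diagonal ((↑) ∘ (√·) ∘ hA.1.eigenvalues) *
  (star hA.1.eigenvectorUnitary : Matrix n n 𝕜)

end PSDSqrt

def skew (ν : Fin 3 → ℝ) : Matrix (Fin 3) (Fin 3) ℝ :=
  !![0, -ν 2, ν 1; ν 2, 0, -ν 0; -ν 1, ν 0, 0]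

/-! Since `θ • [ν]× = [θν]×` and `θν = J Σ^{1/2} γ`, it suffices to bound the displacement
`‖exp A x - x‖` by `‖A x‖` for the skew-symmetric `A = [θν]×`, then `‖[θν]× x‖ ≤ ‖θν‖ ‖x‖`
(Lagrange's identity), and finally `‖J Σ^{1/2} γ‖ ≤ √λ_max(J Σ Jᵀ) ‖γ‖` since
`J Σ Jᵀ = (J Σ^{1/2}) (J Σ^{1/2})ᵀ`. -/

lemma norm_toLp_eq_sqrt_dotProduct {m : Type*} [Fintype m] (v : m → ℝ) :
    ‖WithLp.toLp 2 v‖ = √(v ⬝ᵥ v) := by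
  simp [EuclideanSpace.norm_eq, dotProduct, sq]

lemma eunorm_eq_norm_toLp {n : ℕ} (v : Fin n → ℝ) : eunorm v = ‖WithLp.toLp 2 v‖ := by
  simp [eunorm, EuclideanSpace.norm_eq]

lemma eunorm_eq_sqrt_dotProduct {n : ℕ} (v : Fin n → ℝ) : eunorm v = √(v ⬝ᵥ v) := by
  rw [eunorm_eq_norm_toLp, norm_toLp_eq_sqrt_dotProduct]

lemma eunorm_nonneg {n : ℕ} (v : Fin n → ℝ) : 0 ≤ eunorm v := Real.sqrt_nonneg _

lemma sq_eunorm {n : ℕ} (v : Fin n → ℝ) : eunorm v ^ 2 = v ⬝ᵥ v := by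
  rw [eunorm_eq_norm_toLp, ← real_inner_self_eq_norm_sq, EuclideanSpace.inner_toLp_toLp,
    star_trivial]

lemma dotProduct_le_eunorm_mul_eunorm {n : ℕ} (u v : Fin n → ℝ) :
    u ⬝ᵥ v ≤ eunorm u * eunorm v := by
  simpa [eunorm_eq_norm_toLp, EuclideanSpace.inner_toLp_toLp, dotProduct_comm]
    using real_inner_le_norm (WithLp.toLp 2 u) (WithLp.toLp 2 v)

section Orthogonal

variable {m : Type*} [Fintype m] [DecidableEq m]

lemma dotProduct_mulVec_self_of_transpose_mul_self {R : Matrix m m ℝ} (hR : Rᵀ * R = 1)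
    (x : m → ℝ) : (R *ᵥ x) ⬝ᵥ (R *ᵥ x) = x ⬝ᵥ x := by
  rw [dotProduct_mulVec, ← vecMul_transpose, vecMul_vecMul, hR, vecMul_one]

lemma norm_toLp_mulVec_of_transpose_mul_self {R : Matrix m m ℝ} (hR : Rᵀ * R = 1)
    (x : m → ℝ) : ‖WithLp.toLp 2 (R *ᵥ x)‖ = ‖WithLp.toLp 2 x‖ := by
  rw [norm_toLp_eq_sqrt_dotProduct, norm_toLp_eq_sqrt_dotProduct,
    dotProduct_mulVec_self_of_transpose_mul_self hR]

lemma transpose_exp_mul_exp_of_transpose_eq_neg {A : Matrix m m ℝ} (hA : Aᵀ = -A) :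
    (NormedSpace.exp A)ᵀ * NormedSpace.exp A = 1 := by
  rw [← exp_transpose, hA, ← exp_add_of_commute _ _ (Commute.refl A).neg_left, neg_add_cancel,
    NormedSpace.exp_zero]

lemma hasDerivAt_exp_smul_mulVec (A : Matrix m m ℝ) (x : m → ℝ) (t : ℝ) :
    HasDerivAt (fun u : ℝ => WithLp.toLp 2 (NormedSpace.exp (u • A) *ᵥ x))
      (WithLp.toLp 2 (NormedSpace.exp (t • A) *ᵥ (A *ᵥ x))) t := by
  -- `exp` only depends on the topology, so any normed-algebra structure on matrices will do.
  let : NormedRing (Matrix m m ℝ) := Matrix.linftyOpNormedRing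
  let : NormedAlgebra ℝ (Matrix m m ℝ) := Matrix.linftyOpNormedAlgebra
  let L : Matrix m m ℝ →ₗ[ℝ] EuclideanSpace ℝ m :=
    (WithLp.linearEquiv 2 ℝ (m → ℝ)).symm.toLinearMap ∘ₗ (mulVecBilin ℝ ℝ).flip x
  rw [mulVec_mulVec]
  exact L.toContinuousLinearMap.hasFDerivAt.comp_hasDerivAt t
    (hasDerivAt_exp_smul_const (𝕂 := ℝ) A t)

/-- `u ↦ exp (u • A) x` moves at the constant speed `‖A x‖`, since `exp (u • A)` is orthogonal. -/
lemma norm_toLp_exp_mulVec_sub_le_of_transpose_eq_neg {A : Matrix m m ℝ} (hA : Aᵀ = -A)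
    (x : m → ℝ) :
    ‖WithLp.toLp 2 (NormedSpace.exp A *ᵥ x - x)‖ ≤ ‖WithLp.toLp 2 (A *ᵥ x)‖ := by
  have hspeed : ∀ u ∈ Set.Ico (0 : ℝ) 1,
      ‖WithLp.toLp 2 (NormedSpace.exp (u • A) *ᵥ (A *ᵥ x))‖ ≤ ‖WithLp.toLp 2 (A *ᵥ x)‖ := by
    intro u _
    refine (norm_toLp_mulVec_of_transpose_mul_self ?_ _).le
    exact transpose_exp_mul_exp_of_transpose_eq_neg (by rw [transpose_smul, hA, smul_neg])
  have h := norm_image_sub_le_of_norm_deriv_le_segment'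
    (fun u _ => (hasDerivAt_exp_smul_mulVec A x u).hasDerivWithinAt) hspeed 1
    (Set.right_mem_Icc.mpr zero_le_one)
  simpa [← WithLp.toLp_sub] using h

end Orthogonal

section Spectral

variable {m : Type*} [Fintype m] [DecidableEq m]

lemma dotProduct_diagonal_mulVec_le_iSup_mul (d : m → ℝ) (y : m → ℝ) :
    y ⬝ᵥ (diagonal d *ᵥ y) ≤ (⨆ i, d i) * (y ⬝ᵥ y) := by
  simp only [mulVec_diagonal, dotProduct, Finset.mul_sum]
  refine Finset.sum_le_sum fun i _ => ?_
  calc y i * (d i * y i) = d i * (y i * y i) := by ring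
    _ ≤ (⨆ j, d j) * (y i * y i) :=
      mul_le_mul_of_nonneg_right (le_ciSup (Set.finite_range d).bddAbove i) (mul_self_nonneg _)

lemma Matrix.IsHermitian.dotProduct_mulVec_le_iSup_eigenvalues_mul {H : Matrix m m ℝ}
    (hH : H.IsHermitian) (x : m → ℝ) :
    x ⬝ᵥ (H *ᵥ x) ≤ (⨆ i, hH.eigenvalues i) * (x ⬝ᵥ x) := by
  set U : Matrix m m ℝ := hH.eigenvectorUnitary.1
  have hU : U * Uᵀ = 1 := Unitary.coe_mul_star_self hH.eigenvectorUnitary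
  have hHU : H = U * diagonal hH.eigenvalues * Uᵀ := by
    conv_lhs => rw [hH.spectral_theorem, Unitary.conjStarAlgAut_apply]
    rfl
  calc x ⬝ᵥ (H *ᵥ x) = (Uᵀ *ᵥ x) ⬝ᵥ (diagonal hH.eigenvalues *ᵥ (Uᵀ *ᵥ x)) := by
        conv_lhs => rw [hHU]
        rw [← mulVec_mulVec, ← mulVec_mulVec, dotProduct_mulVec, ← mulVec_transpose]
    _ ≤ (⨆ i, hH.eigenvalues i) * ((Uᵀ *ᵥ x) ⬝ᵥ (Uᵀ *ᵥ x)) :=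
        dotProduct_diagonal_mulVec_le_iSup_mul _ _
    _ = (⨆ i, hH.eigenvalues i) * (x ⬝ᵥ x) := by
        rw [dotProduct_mulVec_self_of_transpose_mul_self (by rwa [transpose_transpose])]

end Spectral

/-- With `w = M γ`: `‖w‖² = ⟪Mᵀ w, γ⟫ ≤ ‖Mᵀ w‖ ‖γ‖` and `‖Mᵀ w‖² = ⟪w, M Mᵀ w⟫ ≤ λ_max ‖w‖²`. -/
lemma eunorm_mulVec_le_sqrt_iSup_eigenvalues_mul {k n : ℕ} {H : Matrix (Fin k) (Fin k) ℝ}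
    (hH : H.IsHermitian) {M : Matrix (Fin k) (Fin n) ℝ} (hMH : M * Mᵀ = H) (γ : Fin n → ℝ) :
    eunorm (M *ᵥ γ) ≤ √(⨆ i, hH.eigenvalues i) * eunorm γ := by
  set w := M *ᵥ γ
  set c := √(⨆ i, hH.eigenvalues i)
  have hw : eunorm w ^ 2 ≤ eunorm (Mᵀ *ᵥ w) * eunorm γ := by
    calc eunorm w ^ 2 = (Mᵀ *ᵥ w) ⬝ᵥ γ := by
          rw [sq_eunorm, dotProduct_mulVec, ← mulVec_transpose]
      _ ≤ eunorm (Mᵀ *ᵥ w) * eunorm γ := dotProduct_le_eunorm_mul_eunorm _ _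
  have hMtw : eunorm (Mᵀ *ᵥ w) ≤ c * eunorm w := by
    calc eunorm (Mᵀ *ᵥ w) = √(w ⬝ᵥ (H *ᵥ w)) := by
          rw [eunorm_eq_sqrt_dotProduct, dotProduct_mulVec, vecMul_transpose, mulVec_mulVec,
            hMH, dotProduct_comm]
      _ ≤ √((⨆ i, hH.eigenvalues i) * (w ⬝ᵥ w)) :=
          Real.sqrt_le_sqrt (hH.dotProduct_mulVec_le_iSup_eigenvalues_mul w)
      _ = c * eunorm w := by
          rw [← sq_eunorm, Real.sqrt_mul' _ (sq_nonneg _), Real.sqrt_sq (eunorm_nonneg w)]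
  have hc : 0 ≤ c := Real.sqrt_nonneg _
  rcases (eunorm_nonneg w).eq_or_lt with hw_zero | hw_pos
  · rw [← hw_zero]
    exact mul_nonneg hc (eunorm_nonneg γ)
  · refine le_of_mul_le_mul_left ?_ hw_pos
    nlinarith [eunorm_nonneg γ]

namespace Matrix.PosSemidef

open scoped ComplexOrder MatrixOrder

variable {n 𝕜 : Type*} [Fintype n] [DecidableEq n] [RCLike 𝕜] {A : Matrix n n 𝕜}

lemma sqrt_eq_cfcSqrt (hA : A.PosSemidef) : hA.sqrt = CFC.sqrt A := by
  rw [CFC.sqrt_eq_real_sqrt A hA.nonneg, cfcₙ_eq_cfc, hA.1.cfc_eq]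
  rfl

lemma sqrt_mul_self (hA : A.PosSemidef) : hA.sqrt * hA.sqrt = A := by
  rw [sqrt_eq_cfcSqrt, CFC.sqrt_mul_sqrt_self A hA.nonneg]

lemma conjTranspose_sqrt (hA : A.PosSemidef) : hA.sqrtᴴ = hA.sqrt := by
  rw [sqrt_eq_cfcSqrt]
  exact (CFC.sqrt_nonneg A).isSelfAdjoint

end Matrix.PosSemidef

lemma skew_mulVec (ν y : Fin 3 → ℝ) : skew ν *ᵥ y = ν ⨯₃ y := by
  ext i
  fin_cases i <;> simp [skew, cross_apply, mulVec, dotProduct, Fin.sum_univ_three] <;> ring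

lemma skew_smul (c : ℝ) (ν : Fin 3 → ℝ) : skew (c • ν) = c • skew ν := by
  ext i j
  fin_cases i <;> fin_cases j <;> simp [skew]

lemma transpose_skew (ν : Fin 3 → ℝ) : (skew ν)ᵀ = -skew ν := by
  ext i j
  fin_cases i <;> fin_cases j <;> simp [skew]

lemma eunorm_skew_mulVec_le (ν y : Fin 3 → ℝ) : eunorm (skew ν *ᵥ y) ≤ eunorm ν * eunorm y := by
  refine (sq_le_sq₀ (eunorm_nonneg _) (mul_nonneg (eunorm_nonneg ν) (eunorm_nonneg y))).mp ?_
  rw [mul_pow, sq_eunorm, sq_eunorm, sq_eunorm, skew_mulVec, cross_dot_cross, dotProduct_comm y ν]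
  nlinarith [sq_nonneg (ν ⬝ᵥ y)]

lemma eunorm_exp_skew_mulVec_sub_le (ν x : Fin 3 → ℝ) :
    eunorm (NormedSpace.exp (skew ν) *ᵥ x - x) ≤ eunorm ν * eunorm x := by
  rw [eunorm_eq_norm_toLp]
  refine (norm_toLp_exp_mulVec_sub_le_of_transpose_eq_neg (transpose_skew ν) x).trans ?_
  rw [← eunorm_eq_norm_toLp]
  exact eunorm_skew_mulVec_le ν x

theorem rotation_backoff_bound_general {n : ℕ}
    (J : Matrix (Fin 3) (Fin n) ℝ) (S : Matrix (Fin n) (Fin n) ℝ)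
    (hS : S.PosSemidef) (hH : (J * S * Jᵀ).IsHermitian)
    (γ : Fin n → ℝ) (hγ : eunorm γ ≤ 1)
    (ν : Fin 3 → ℝ) (θ : ℝ)
    (hθν : θ • ν = (J * hS.sqrt) *ᵥ γ)
    (γshp : Fin 3 → ℝ) :
    eunorm (NormedSpace.exp (θ • skew ν) *ᵥ γshp - γshp) ≤
      Real.sqrt (⨆ i, hH.eigenvalues i) * eunorm γshp := by
  have hJS : J * hS.sqrt * (J * hS.sqrt)ᵀ = J * S * Jᵀ := by
    rw [transpose_mul, ← conjTranspose_eq_transpose_of_trivial hS.sqrt, hS.conjTranspose_sqrt,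
      Matrix.mul_assoc, ← Matrix.mul_assoc hS.sqrt, hS.sqrt_mul_self, Matrix.mul_assoc]
  have hθν_le : eunorm (θ • ν) ≤ √(⨆ i, hH.eigenvalues i) := by
    rw [hθν]
    calc eunorm ((J * hS.sqrt) *ᵥ γ) ≤ √(⨆ i, hH.eigenvalues i) * eunorm γ :=
          eunorm_mulVec_le_sqrt_iSup_eigenvalues_mul hH hJS γ
      _ ≤ √(⨆ i, hH.eigenvalues i) := mul_le_of_le_one_right (Real.sqrt_nonneg _) hγ
  rw [← skew_smul]
  exact (eunorm_exp_skew_mulVec_sub_le _ _).trans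
    (mul_le_mul_of_nonneg_right hθν_le (eunorm_nonneg _))

theorem rotation_backoff_bound {n : ℕ} [NeZero n]
    (J : Matrix (Fin 3) (Fin n) ℝ) (S : Matrix (Fin n) (Fin n) ℝ)
    (hS : S.PosSemidef) (hH : (J * S * Jᵀ).IsHermitian)
    (γ : Fin n → ℝ) (hγ : eunorm γ ≤ 1)
    (ν : Fin 3 → ℝ) (hν : eunorm ν = 1) (θ : ℝ) (hθ : 0 ≤ θ)
    (hθν : θ • ν = (J * hS.sqrt) *ᵥ γ)
    (γshp : Fin 3 → ℝ) :
    eunorm (NormedSpace.exp (θ • skew ν) *ᵥ γshp - γshp) ≤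
      Real.sqrt (⨆ i, hH.eigenvalues i) * eunorm γshp :=
  rotation_backoff_bound_general J S hS hH γ hγ ν θ hθν γshp
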